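/- For points p_1,…,p_5 in general position in P^3, the fat points ideal I(2,2,1,1,1) = m_{p_1}^2 ∩ m_{p_2}^2 ∩ m_{p_3} ∩ m_{p_4} ∩ m_{p_5} satisfies γ(I(2,2,1,1,1)) ≥ 7/3; in fact the fat points ideal I(6m,6m,3m,3m,3m) contains no nonzero form of degree 7m−1 for any integer m ≥ 1. -/

import Mathlib

open MvPolynomial Filter

/-- The homogeneous ideal of all forms vanishing at the (projective) point with
coordinate vector `p`. -/
noncomputable def pointIdeal {k : Type*} [Field k] {σ : Type*} (p : σ → k) :
    Ideal (MvPolynomial σ k) :=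
  Ideal.span { f | (∃ d, f.IsHomogeneous d) ∧ eval p f = 0 }

/-- The fat points ideal `⋂ⱼ m_{pⱼ}^{mⱼ}` (natural multiplicities). -/
noncomputable def fatIdeal {k : Type*} [Field k] {N n : ℕ} (p : Fin n → (Fin (N + 1) → k))
    (m : Fin n → ℕ) : Ideal (MvPolynomial (Fin (N + 1)) k) :=
  ⨅ j, pointIdeal (p j) ^ (m j)

/-- The fat points ideal with integer multiplicities, with the convention
`m_p^m = (1)` for `m ≤ 0`. -/
noncomputable def fatIdealZ {k : Type*} [Field k] {N n : ℕ} (p : Fin n → (Fin (N + 1) → k))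
    (m : Fin n → ℤ) : Ideal (MvPolynomial (Fin (N + 1)) k) :=
  ⨅ j, pointIdeal (p j) ^ (m j).toNat

/-- The irrelevant maximal ideal `M = (x_0, …, x_N)`. -/
noncomputable def maxIdeal (k : Type*) [Field k] (N : ℕ) : Ideal (MvPolynomial (Fin (N + 1)) k) :=
  Ideal.span (Set.range X)

/-- `α(I)`: the least `t ≥ 0` such that `I` contains a nonzero form of degree `t`. -/
noncomputable def alpha {k : Type*} [Field k] {σ : Type*}
    (I : Ideal (MvPolynomial σ k)) : ℕ :=
  sInf { t | ∃ f ∈ I, f ≠ 0 ∧ f.IsHomogeneous t }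

/-- The sequence `t ↦ α(I^{(t)})/t` attached to the fat points ideal with points `p`
and multiplicities `m`; its limit as `t → ∞` is the Waldschmidt constant `γ`. -/
noncomputable def alphaSeq {k : Type*} [Field k] {N n : ℕ}
    (p : Fin n → (Fin (N + 1) → k)) (m : Fin n → ℕ) (t : ℕ) : ℝ :=
  (alpha (fatIdeal p fun j => t * m j) : ℝ) / t

/-- `P` holds for `n`-tuples of points of `P^N` in general position: there is a
nonempty Zariski-open subset (the complement of the zero locus of a set `S` of
polynomials in the coordinates of the tuple) of tuples of nonzero coordinate
vectors on which `P` holds. -/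
def Generic (k : Type*) [Field k] (N n : ℕ)
    (P : (Fin n → (Fin (N + 1) → k)) → Prop) : Prop :=
  ∃ S : Set (MvPolynomial (Fin n × Fin (N + 1)) k),
    (∃ p : Fin n → (Fin (N + 1) → k), (∀ j, p j ≠ 0) ∧
      ∃ f ∈ S, eval (fun q => p q.1 q.2) f ≠ 0) ∧
    ∀ p : Fin n → (Fin (N + 1) → k), (∀ j, p j ≠ 0) →
      (∃ f ∈ S, eval (fun q => p q.1 q.2) f ≠ 0) → P p

/-!
A linear change of coordinates moves five general points of `ℙ³` to the standard frame
`e₀, e₁, e₂, e₃, (1,1,1,1)`. A form `F` vanishing to order `aᵢ` at `eᵢ` has only monomials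
`x^d` with `∑_{j ≠ i} d j ≥ aᵢ`, so the standard Cremona transformation `Xᵢ ↦ ∏_{j ≠ i} Xⱼ`,
which acts on exponents by `d ↦ (∑_{j ≠ i} d j)ᵢ`, sends `F` to `X^a · G`. For
`F ∈ I(6m,6m,3m,3m,3m)` of degree `7m - 1`, `G` has degree `3(7m - 1) - 18m = 3m - 3`, while it
still vanishes to order `3m` at `(1,1,1,1)`, which the Cremona transformation fixes and `X^a`
does not pass through. Hence `G = 0`, and `F = 0` since the Cremona transformation is injective.
Along `t = 3m`, `α(I^(t))/t ≥ 7m/3m`, so `γ ≥ 7/3`.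
-/

namespace FatPoints

open scoped Matrix

section SpanX

variable {σ R : Type*} [CommSemiring R]

theorem natCast_le_weightedOrder_iff (w : σ → ℕ) (f : MvPolynomial σ R) (n : ℕ) :
    (n : ℕ∞) ≤ (f : MvPowerSeries σ R).weightedOrder w ↔
      ∀ d ∈ f.support, n ≤ Finsupp.weight w d := by
  refine ⟨fun h d hd => ?_, fun h => MvPowerSeries.nat_le_weightedOrder w fun d hd => ?_⟩
  · by_contra! hlt
    refine mem_support_iff.1 hd ?_
    rw [← coeff_coe]
    exact MvPowerSeries.coeff_eq_zero_of_lt_weightedOrder w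
      (lt_of_lt_of_le (by exact_mod_cast hlt) h)
  · rw [coeff_coe]
    by_contra hne
    exact (h d (mem_support_iff.2 hne)).not_gt hd

theorem monomial_mem_span_X_image_pow (s : Set σ) (d : σ →₀ ℕ) (c : R) :
    monomial d c ∈ Ideal.span (X '' s) ^ Finsupp.weight (s.indicator 1) d := by
  classical
  rw [monomial_eq, Finsupp.weight_apply, Finsupp.sum, ← Finset.prod_pow_eq_pow_sum]
  refine Ideal.mul_mem_left _ _ (Ideal.prod_mem_prod fun j _ => ?_)
  by_cases hj : j ∈ s
  · simpa [hj] using Ideal.pow_mem_pow (Ideal.subset_span (Set.mem_image_of_mem X hj)) (d j)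
  · simp [hj]

theorem mem_span_X_image_pow_iff (s : Set σ) (t : ℕ) (f : MvPolynomial σ R) :
    f ∈ Ideal.span (X '' s) ^ t ↔ ∀ d ∈ f.support, t ≤ Finsupp.weight (s.indicator 1) d := by
  refine ⟨fun hf => ?_, fun h => ?_⟩
  · rw [← natCast_le_weightedOrder_iff]
    induction t generalizing f with
    | zero => simp
    | succ t ih =>
      rw [pow_succ] at hf
      refine Submodule.mul_induction_on hf (fun g hg h hh => ?_) (fun g h hg hh => ?_)
      · rw [coe_mul, Nat.cast_succ]
        refine le_trans ?_ (MvPowerSeries.le_weightedOrder_mul _)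
        gcongr
        · exact ih g hg
        · rw [← Nat.cast_one, natCast_le_weightedOrder_iff]
          intro d hd
          obtain ⟨j, hj, hdj⟩ := mem_ideal_span_X_image.1 hh d hd
          simpa [hj] using Finsupp.le_weight_of_ne_zero' (s.indicator (1 : σ → ℕ)) hdj
      · rw [coe_add]
        exact le_trans (le_min hg hh) (MvPowerSeries.min_weightedOrder_le_add _)
  · rw [f.as_sum]
    exact Ideal.sum_mem _ fun d hd =>
      Ideal.pow_le_pow_right (h d hd) (monomial_mem_span_X_image_pow s d _)

theorem mem_span_X_image_pow_of_mul_mem [NoZeroDivisors R] {s : Set σ} {t : ℕ}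
    {ℓ f : MvPolynomial σ R} (hℓ : ℓ ∉ Ideal.span (X '' s))
    (h : ℓ * f ∈ Ideal.span (X '' s) ^ t) : f ∈ Ideal.span (X '' s) ^ t := by
  -- `ℓ` has weighted order `0` and the weighted order is additive over a domain.
  rw [← pow_one (Ideal.span _), mem_span_X_image_pow_iff] at hℓ
  simp only [not_forall, not_le] at hℓ
  obtain ⟨d, hd, hwd⟩ := hℓ
  have hℓ0 : (ℓ : MvPowerSeries σ R).weightedOrder (s.indicator 1) = 0 := by
    refine le_antisymm ?_ zero_le
    simpa [Nat.lt_one_iff.1 hwd] using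
      MvPowerSeries.weightedOrder_le (s.indicator 1) (f := (ℓ : MvPowerSeries σ R))
        (d := d) (by rwa [coeff_coe, ← mem_support_iff])
  rw [mem_span_X_image_pow_iff, ← natCast_le_weightedOrder_iff] at h ⊢
  rwa [coe_mul, MvPowerSeries.weightedOrder_mul, hℓ0, zero_add] at h

theorem eq_zero_of_mem_span_X_image_pow {s : Set σ} {t n : ℕ} {f : MvPolynomial σ R}
    (hf : f.IsHomogeneous n) (hn : n < t) (h : f ∈ Ideal.span (X '' s) ^ t) : f = 0 := by
  rw [← support_eq_empty, Finset.eq_empty_iff_forall_notMem]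
  intro d hd
  have hw : Finsupp.weight (s.indicator 1) d ≤ Finsupp.weight (1 : σ → ℕ) d := by
    simp only [Finsupp.weight_apply, Finsupp.sum]
    gcongr with j
    exact Set.indicator_le_self' (fun _ _ => zero_le_one) j
  have hdeg : Finsupp.weight (1 : σ → ℕ) d = n := hf (mem_support_iff.1 hd)
  have := (mem_span_X_image_pow_iff s t f).1 h d hd
  omega

end SpanX

section PointIdeal

variable {σ k : Type*} [Field k]

theorem eval_eq_zero_of_mem_pointIdeal {p : σ → k} {f : MvPolynomial σ k}
    (h : f ∈ pointIdeal p) : eval p f = 0 :=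
  (Ideal.span_le (I := RingHom.ker (eval p)).2 fun _ hg => hg.2) h

theorem mem_pointIdeal_of_isHomogeneous {p : σ → k} {f : MvPolynomial σ k} {n : ℕ}
    (hf : f.IsHomogeneous n) (h : eval p f = 0) : f ∈ pointIdeal p :=
  Ideal.subset_span ⟨⟨n, hf⟩, h⟩

theorem _root_.MvPolynomial.IsHomogeneous.eval_smul {f : MvPolynomial σ k} {n : ℕ}
    (hf : f.IsHomogeneous n) (c : k) (p : σ → k) : eval (c • p) f = c ^ n * eval p f := by
  simp only [eval_eq, Finset.mul_sum, Pi.smul_apply, smul_eq_mul, mul_pow,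
    Finset.prod_mul_distrib, Finset.prod_pow_eq_pow_sum]
  refine Finset.sum_congr rfl fun d hd => ?_
  rw [← hf.degree_eq_sum_deg_support hd]
  ring

theorem pointIdeal_smul {c : k} (hc : c ≠ 0) (p : σ → k) :
    pointIdeal (c • p) = pointIdeal p := by
  unfold pointIdeal
  congr 1
  ext f
  refine and_congr_right fun ⟨n, hf⟩ => ?_
  simp [hf.eval_smul, hc]

variable [DecidableEq σ]

theorem pointIdeal_piSingle (i : σ) :
    pointIdeal (Pi.single i 1 : σ → k) = Ideal.span (X '' {i}ᶜ) := by
  have hle : Ideal.span (X '' {i}ᶜ) ≤ pointIdeal (Pi.single i 1 : σ → k) := by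
    refine Ideal.span_le.2 ?_
    rintro _ ⟨j, hj, rfl⟩
    exact mem_pointIdeal_of_isHomogeneous (isHomogeneous_X k j)
      (by simp [Pi.single_eq_of_ne hj])
  refine le_antisymm (Ideal.span_le.2 ?_) hle
  rintro f ⟨⟨n, hf⟩, hev⟩
  set c := coeff (Finsupp.single i n) f
  have hg : f - monomial (Finsupp.single i n) c ∈ Ideal.span (X '' {i}ᶜ) := by
    refine mem_ideal_span_X_image.2 fun d hd => ?_
    rw [mem_support_iff, coeff_sub, coeff_monomial] at hd
    by_contra! hoff
    have hdi : d = Finsupp.single i (d i) :=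
      Finsupp.eq_single_iff.2 ⟨fun j hj => by_contra fun hji =>
        Finsupp.mem_support_iff.1 hj (hoff j (by simpa using hji)), rfl⟩
    split_ifs at hd with hdn
    · exact hd (by rw [← hdn, sub_self])
    · have hdeg := hf (by simpa using hd)
      rw [hdi, Finsupp.weight_single, smul_eq_mul, Pi.one_apply, mul_one] at hdeg
      exact hdn (by rw [hdi, hdeg])
  have hc : c = 0 := by
    have := eval_eq_zero_of_mem_pointIdeal (hle hg)
    rwa [map_sub, hev, zero_sub, neg_eq_zero, eval_monomial,
      Finsupp.prod_single_index (by simp), Pi.single_eq_same, one_pow, mul_one] at this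
  simpa [hc] using hg

end PointIdeal

section LinearSubst

variable {σ τ k : Type*} [Field k]

theorem eval_aeval (g : σ → MvPolynomial τ k) (q : τ → k) (f : MvPolynomial σ k) :
    eval q (aeval g f) = eval (fun i => eval q (g i)) f := by
  rw [← coe_aeval_eq_eval, ← coe_aeval_eq_eval]
  exact DFunLike.congr_fun (comp_aeval g (aeval q)) f

theorem aeval_mem_pointIdeal_pow {g : σ → MvPolynomial τ k} {r : ℕ}
    (hg : ∀ i, (g i).IsHomogeneous r) {p : σ → k} {q : τ → k}
    (hq : ∀ i, eval q (g i) = p i) {s : ℕ} {f : MvPolynomial σ k}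
    (hf : f ∈ pointIdeal p ^ s) : aeval g f ∈ pointIdeal q ^ s := by
  have hmap : (pointIdeal p).map (aeval g) ≤ pointIdeal q := by
    rw [pointIdeal, Ideal.map_span, Ideal.span_le]
    rintro _ ⟨h, ⟨⟨d, hd⟩, hev⟩, rfl⟩
    exact mem_pointIdeal_of_isHomogeneous (hd.aeval g hg) (by rwa [eval_aeval, funext hq])
  have := Ideal.mem_map_of_mem (aeval g) hf
  rw [Ideal.map_pow] at this
  exact Ideal.pow_right_mono hmap s this

variable [Fintype σ]

noncomputable def linearSubst (M : Matrix σ σ k) : MvPolynomial σ k →ₐ[k] MvPolynomial σ k :=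
  aeval fun i => ∑ j, C (M i j) * X j

theorem isHomogeneous_linearForm (v : σ → k) : (∑ j, C (v j) * X j).IsHomogeneous 1 :=
  IsHomogeneous.sum _ _ _ fun j _ => isHomogeneous_C_mul_X (v j) j

theorem eval_linearForm (v q : σ → k) : eval q (∑ j, C (v j) * X j) = v ⬝ᵥ q := by
  simp [dotProduct]

theorem eval_linearSubst (M : Matrix σ σ k) (q : σ → k) (f : MvPolynomial σ k) :
    eval q (linearSubst M f) = eval (M *ᵥ q) f := by
  rw [linearSubst, eval_aeval]
  simp only [eval_linearForm]
  rfl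

theorem _root_.MvPolynomial.IsHomogeneous.linearSubst {f : MvPolynomial σ k} {n : ℕ}
    (hf : f.IsHomogeneous n) (M : Matrix σ σ k) : (linearSubst M f).IsHomogeneous n := by
  have := hf.aeval _ fun i => isHomogeneous_linearForm (M i)
  rwa [one_mul] at this

theorem linearSubst_mem_pointIdeal_pow {M : Matrix σ σ k} {p : σ → k} {s : ℕ}
    {f : MvPolynomial σ k} (hf : f ∈ pointIdeal (M *ᵥ p) ^ s) :
    linearSubst M f ∈ pointIdeal p ^ s :=
  aeval_mem_pointIdeal_pow (fun i => isHomogeneous_linearForm (M i))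
    (fun i => eval_linearForm (M i) p) hf

theorem linearSubst_linearSubst (M N : Matrix σ σ k) (f : MvPolynomial σ k) :
    linearSubst M (linearSubst N f) = linearSubst (N * M) f := by
  rw [← AlgHom.comp_apply]
  congr 1
  refine algHom_ext fun i => ?_
  simp [linearSubst, Matrix.mul_apply, Finset.mul_sum, Finset.sum_mul, mul_assoc]
  exact Finset.sum_comm

variable [DecidableEq σ]

theorem linearSubst_one (f : MvPolynomial σ k) : linearSubst 1 f = f := by
  have hX : (fun i => ∑ j, C ((1 : Matrix σ σ k) i j) * X j) = X := by
    funext i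
    simp [Matrix.one_apply]
  rw [linearSubst, hX, aeval_X_left_apply]

theorem linearSubst_inv_linearSubst {M : Matrix σ σ k} (hM : IsUnit M.det)
    (f : MvPolynomial σ k) : linearSubst M⁻¹ (linearSubst M f) = f := by
  rw [linearSubst_linearSubst, Matrix.mul_nonsing_inv _ hM, linearSubst_one]

theorem linearSubst_injective {M : Matrix σ σ k} (hM : IsUnit M.det) :
    Function.Injective (linearSubst M) :=
  Function.LeftInverse.injective (linearSubst_inv_linearSubst hM)

theorem linearSubst_mem_pointIdeal_pow_iff {M : Matrix σ σ k} (hM : IsUnit M.det) {p : σ → k}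
    {s : ℕ} {f : MvPolynomial σ k} :
    linearSubst M f ∈ pointIdeal p ^ s ↔ f ∈ pointIdeal (M *ᵥ p) ^ s := by
  refine ⟨fun h => ?_, linearSubst_mem_pointIdeal_pow⟩
  rw [← linearSubst_inv_linearSubst hM f]
  apply linearSubst_mem_pointIdeal_pow
  rwa [Matrix.mulVec_mulVec, Matrix.nonsing_inv_mul _ hM, Matrix.one_mulVec]

theorem exists_isUnit_det_mulVec_single {p : σ → k} (hp : p ≠ 0) :
    ∃ i, ∃ M : Matrix σ σ k, IsUnit M.det ∧ M *ᵥ Pi.single i 1 = p := by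
  obtain ⟨i, hi⟩ := Function.ne_iff.1 hp
  refine ⟨i, (1 : Matrix σ σ k).updateCol i p, ?_, ?_⟩
  · rw [← Matrix.cramer_apply, Matrix.cramer_one]
    exact isUnit_iff_ne_zero.2 hi
  · ext j
    simp

theorem mem_pointIdeal_pow_of_mul_mem {p : σ → k} (hp : p ≠ 0) {ℓ f : MvPolynomial σ k}
    {t : ℕ} (hℓ : eval p ℓ ≠ 0) (h : ℓ * f ∈ pointIdeal p ^ t) : f ∈ pointIdeal p ^ t := by
  obtain ⟨i, M, hM, rfl⟩ := exists_isUnit_det_mulVec_single hp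
  rw [← linearSubst_mem_pointIdeal_pow_iff hM, map_mul, pointIdeal_piSingle] at h
  rw [← linearSubst_mem_pointIdeal_pow_iff hM, pointIdeal_piSingle]
  refine mem_span_X_image_pow_of_mul_mem (fun hmem => hℓ ?_) h
  rw [← eval_linearSubst]
  exact eval_eq_zero_of_mem_pointIdeal ((pointIdeal_piSingle i).ge hmem)

theorem eq_zero_of_mem_pointIdeal_pow {p : σ → k} (hp : p ≠ 0) {f : MvPolynomial σ k}
    {n t : ℕ} (hf : f.IsHomogeneous n) (hn : n < t) (h : f ∈ pointIdeal p ^ t) : f = 0 := by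
  obtain ⟨i, M, hM, rfl⟩ := exists_isUnit_det_mulVec_single hp
  rw [← linearSubst_mem_pointIdeal_pow_iff hM, pointIdeal_piSingle] at h
  exact linearSubst_injective hM <|
    (eq_zero_of_mem_span_X_image_pow (hf.linearSubst M) hn h).trans (map_zero _).symm

end LinearSubst

section Cremona

variable {σ R : Type*} [Fintype σ] [DecidableEq σ] [CommSemiring R]

noncomputable def cremona : MvPolynomial σ R →ₐ[R] MvPolynomial σ R :=
  aeval fun i => ∏ j ∈ {i}ᶜ, X j

noncomputable def cremonaExp (d : σ →₀ ℕ) : σ →₀ ℕ :=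
  Finsupp.equivFunOnFinite.symm fun i => ∑ j ∈ {i}ᶜ, d j

theorem cremonaExp_apply (d : σ →₀ ℕ) (i : σ) : cremonaExp d i = ∑ j ∈ {i}ᶜ, d j := rfl

theorem cremonaExp_apply_add_self (d : σ →₀ ℕ) (i : σ) : cremonaExp d i + d i = d.degree := by
  rw [cremonaExp_apply, ← Finset.sum_singleton d i, Finset.sum_compl_add_sum,
    Finsupp.degree_eq_sum]

theorem cremonaExp_injective [Nontrivial σ] : Function.Injective (cremonaExp (σ := σ)) := by
  intro d d' h
  have hsum (e : σ →₀ ℕ) : ∑ i, cremonaExp e i + e.degree = Fintype.card σ * e.degree := by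
    rw [Finsupp.degree_eq_sum e, ← Finset.sum_add_distrib, ← Finsupp.degree_eq_sum]
    simp [cremonaExp_apply_add_self]
  have hdeg : d.degree = d'.degree := by
    have h1 := hsum d
    rw [h] at h1
    have := hsum d'
    have := Fintype.one_lt_card (α := σ)
    nlinarith
  ext i
  have h1 := cremonaExp_apply_add_self d i
  have h2 := cremonaExp_apply_add_self d' i
  rw [h] at h1
  omega

theorem cremona_monomial (d : σ →₀ ℕ) (c : R) :
    cremona (monomial d c) = monomial (cremonaExp d) c := by
  rw [cremona, aeval_monomial, monomial_eq, algebraMap_eq,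
    Finsupp.prod_fintype _ _ fun _ => pow_zero _, Finsupp.prod_fintype _ _ fun _ => pow_zero _]
  congr 1
  simp_rw [← Finset.prod_pow, cremonaExp_apply, ← Finset.prod_pow_eq_pow_sum]
  exact Finset.prod_comm' (by simp [ne_comm])

theorem cremona_eq_mapDomain (f : MvPolynomial σ R) :
    cremona f = AddMonoidAlgebra.mapDomain cremonaExp f := by
  induction f using MvPolynomial.induction_on' with
  | monomial d c => exact (cremona_monomial d c).trans (AddMonoidAlgebra.mapDomain_single).symm
  | add f g hf hg => rw [map_add, hf, hg, AddMonoidAlgebra.mapDomain_add]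

theorem cremona_injective [Nontrivial σ] : Function.Injective (cremona (σ := σ) (R := R)) := by
  intro f g h
  rw [cremona_eq_mapDomain, cremona_eq_mapDomain] at h
  exact AddMonoidAlgebra.mapDomain_injective cremonaExp_injective h

theorem isHomogeneous_prod_compl_singleton_X (i : σ) :
    (∏ j ∈ {i}ᶜ, X j : MvPolynomial σ R).IsHomogeneous (Fintype.card σ - 1) := by
  simpa [Finset.card_compl] using IsHomogeneous.prod ({i}ᶜ : Finset σ) X (fun _ => 1)
    fun j _ => isHomogeneous_X R j

theorem _root_.MvPolynomial.IsHomogeneous.cremona {f : MvPolynomial σ R} {n : ℕ}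
    (hf : f.IsHomogeneous n) : (cremona f).IsHomogeneous ((Fintype.card σ - 1) * n) :=
  hf.aeval _ isHomogeneous_prod_compl_singleton_X

end Cremona

section CremonaPointIdeal

variable {σ k : Type*} [Fintype σ] [DecidableEq σ] [Field k]

theorem mem_pointIdeal_piSingle_pow_iff {i : σ} {t : ℕ} {f : MvPolynomial σ k} :
    f ∈ pointIdeal (Pi.single i 1 : σ → k) ^ t ↔ ∀ d ∈ f.support, t ≤ ∑ j ∈ {i}ᶜ, d j := by
  rw [pointIdeal_piSingle, mem_span_X_image_pow_iff]
  simp [Finsupp.weight_eq_sum, Set.indicator_apply, Finset.sum_ite, Finset.filter_ne',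
    Finset.compl_singleton]

theorem cremona_mem_pointIdeal_one_pow {t : ℕ} {f : MvPolynomial σ k}
    (hf : f ∈ pointIdeal (1 : σ → k) ^ t) : cremona f ∈ pointIdeal (1 : σ → k) ^ t :=
  aeval_mem_pointIdeal_pow isHomogeneous_prod_compl_singleton_X (fun i => by simp) hf

theorem monomial_dvd_cremona {a : σ →₀ ℕ} {f : MvPolynomial σ k}
    (h : ∀ i, f ∈ pointIdeal (Pi.single i 1 : σ → k) ^ a i) : monomial a 1 ∣ cremona f := by
  rw [f.as_sum, map_sum]
  refine Finset.dvd_sum fun d hd => ?_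
  rw [cremona_monomial, monomial_dvd_monomial]
  exact ⟨Or.inr fun i => mem_pointIdeal_piSingle_pow_iff.1 (h i) d hd, one_dvd _⟩

end CremonaPointIdeal

theorem isHomogeneous_of_monomial_one_mul {σ R : Type*} [CommSemiring R] {a : σ →₀ ℕ}
    {g : MvPolynomial σ R} {n : ℕ} (h : (monomial a 1 * g).IsHomogeneous n) :
    g.IsHomogeneous (n - a.degree) := by
  intro d hd
  have := h (by rwa [coeff_monomial_mul, one_mul])
  have ha : a.degree = Finsupp.weight 1 a := by rw [Finsupp.degree_eq_weight_one]; rfl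
  rw [map_add] at this
  omega

theorem eq_zero_of_vanishing_on_stdFrame {k : Type*} [Field k] {m : ℕ} (hm : 1 ≤ m)
    {F : MvPolynomial (Fin 4) k} (hF : F.IsHomogeneous (7 * m - 1))
    (h0 : F ∈ pointIdeal (Pi.single 0 1 : Fin 4 → k) ^ (6 * m))
    (h1 : F ∈ pointIdeal (Pi.single 1 1 : Fin 4 → k) ^ (6 * m))
    (h2 : F ∈ pointIdeal (Pi.single 2 1 : Fin 4 → k) ^ (3 * m))
    (h3 : F ∈ pointIdeal (Pi.single 3 1 : Fin 4 → k) ^ (3 * m))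
    (h4 : F ∈ pointIdeal (1 : Fin 4 → k) ^ (3 * m)) : F = 0 := by
  set a : Fin 4 →₀ ℕ := Finsupp.equivFunOnFinite.symm ![6 * m, 6 * m, 3 * m, 3 * m]
  have ha : ∀ i, F ∈ pointIdeal (Pi.single i 1 : Fin 4 → k) ^ a i := by
    intro i
    fin_cases i
    · simpa [a] using h0
    · simpa [a] using h1
    · simpa [a] using h2
    · simpa [a] using h3
  obtain ⟨G, hG⟩ := monomial_dvd_cremona ha
  have hGhom : G.IsHomogeneous (3 * m - 3) := by
    have hdeg : a.degree = 18 * m := by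
      simp [a, Finsupp.degree_eq_sum, Fin.sum_univ_four]
      ring
    have := isHomogeneous_of_monomial_one_mul (hG ▸ hF.cremona)
    rwa [hdeg, Fintype.card_fin, show (4 - 1) * (7 * m - 1) - 18 * m = 3 * m - 3 by omega] at this
  have hGmem : G ∈ pointIdeal (1 : Fin 4 → k) ^ (3 * m) :=
    mem_pointIdeal_pow_of_mul_mem one_ne_zero (by simp [eval_monomial])
      (hG ▸ cremona_mem_pointIdeal_one_pow h4)
  have hG0 : G = 0 := eq_zero_of_mem_pointIdeal_pow one_ne_zero hGhom (by omega) hGmem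
  exact cremona_injective (by rw [hG, hG0, mul_zero, map_zero])

section Frame

variable {k : Type*} [Field k] {n : ℕ}

def stdFrame (k : Type*) [Field k] (n : ℕ) : Fin (n + 1) → Fin n → k :=
  Fin.snoc (α := fun _ => Fin n → k) (fun i => Pi.single i 1) 1

def frameMatrix {R : Type*} (p : Fin (n + 1) → Fin n → R) : Matrix (Fin n) (Fin n) R :=
  Matrix.of fun a b => p b.castSucc a

/-- `frameDet p ≠ 0` says that any `n` of the `n + 1` vectors `p` are linearly independent:
the `l`-th factor of the product is the determinant of the choice omitting `p l`. -/
def frameDet {R : Type*} [CommRing R] (p : Fin (n + 1) → Fin n → R) : R :=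
  (frameMatrix p).det * ∏ l, ((frameMatrix p).updateCol l (p (Fin.last n))).det

theorem map_frameDet {R S : Type*} [CommRing R] [CommRing S] (f : R →+* S)
    (p : Fin (n + 1) → Fin n → R) : f (frameDet p) = frameDet fun j a => f (p j a) := by
  simp only [frameDet, map_mul, map_prod, RingHom.map_det, RingHom.mapMatrix_apply,
    Matrix.map_updateCol]
  rfl

theorem frameDet_stdFrame : frameDet (stdFrame k n) = 1 := by
  have h1 : frameMatrix (stdFrame k n) = 1 := by
    ext a b
    simp [frameMatrix, stdFrame, Matrix.one_apply, Pi.single_apply]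
  rw [frameDet, h1, stdFrame, Fin.snoc_last]
  simp [← Matrix.cramer_apply]

theorem stdFrame_ne_zero [NeZero n] (j : Fin (n + 1)) : stdFrame k n j ≠ 0 := by
  induction j using Fin.lastCases <;> simp [stdFrame]

theorem exists_mulVec_stdFrame {p : Fin (n + 1) → Fin n → k} (hp : frameDet p ≠ 0) :
    ∃ M : Matrix (Fin n) (Fin n) k, IsUnit M.det ∧
      ∀ j, pointIdeal (M *ᵥ stdFrame k n j) = pointIdeal (p j) := by
  set A := frameMatrix p
  set c := A.cramer (p (Fin.last n))
  have hdet : (A * Matrix.diagonal c).det = frameDet p := by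
    simp [Matrix.det_mul, c, Matrix.cramer_apply, frameDet, A]
  have hprod : A.det * ∏ l, c l ≠ 0 := by rwa [← Matrix.det_diagonal, ← Matrix.det_mul, hdet]
  have hA : A.det ≠ 0 := left_ne_zero_of_mul hprod
  have hc : ∀ l, c l ≠ 0 := fun l =>
    Finset.prod_ne_zero_iff.1 (right_ne_zero_of_mul hprod) l (Finset.mem_univ l)
  refine ⟨A * Matrix.diagonal c, isUnit_iff_ne_zero.2 (hdet ▸ hp), fun j => ?_⟩
  induction j using Fin.lastCases with
  | last =>
    rw [stdFrame, Fin.snoc_last, ← Matrix.mulVec_mulVec]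
    have : Matrix.diagonal c *ᵥ 1 = c := by ext; simp [Matrix.mulVec_diagonal]
    rw [this, Matrix.mulVec_cramer, pointIdeal_smul hA]
  | cast i =>
    rw [stdFrame, Fin.snoc_castSucc, ← Matrix.mulVec_mulVec]
    have : Matrix.diagonal c *ᵥ Pi.single i 1 = c i • Pi.single i 1 := by
      ext l
      by_cases hl : l = i <;> simp [Matrix.mulVec_diagonal, hl]
    rw [this, Matrix.mulVec_smul, Matrix.mulVec_single_one, pointIdeal_smul (hc i)]
    rfl

end Frame

section Waldschmidt

variable {k : Type*} [Field k] {N n : ℕ}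

theorem linearSubst_mem_fatIdeal {M : Matrix (Fin (N + 1)) (Fin (N + 1)) k}
    {p q : Fin n → Fin (N + 1) → k} (hM : ∀ j, pointIdeal (M *ᵥ q j) = pointIdeal (p j))
    {m : Fin n → ℕ} {F : MvPolynomial (Fin (N + 1)) k} (hF : F ∈ fatIdeal p m) :
    linearSubst M F ∈ fatIdeal q m := by
  rw [fatIdeal, Ideal.mem_iInf] at hF ⊢
  exact fun j => linearSubst_mem_pointIdeal_pow (by rw [hM]; exact hF j)

theorem exists_linearForm_eval_eq_zero {σ : Type*} [Nontrivial σ] {q : σ → k} (hq : q ≠ 0) :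
    ∃ ℓ : MvPolynomial σ k, ℓ.IsHomogeneous 1 ∧ ℓ ≠ 0 ∧ eval q ℓ = 0 := by
  obtain ⟨i, hi⟩ := Function.ne_iff.1 hq
  obtain ⟨j, hji⟩ := exists_ne i
  refine ⟨C (q i) * X j - C (q j) * X i, (isHomogeneous_C_mul_X _ _).sub
    (isHomogeneous_C_mul_X _ _), fun h => hi ?_, by simp [mul_comm]⟩
  classical
  simpa [coeff_X, Finsupp.single_left_inj one_ne_zero, hji.symm] using
    congrArg (coeff (Finsupp.single j 1)) h

theorem exists_isHomogeneous_mem_fatIdeal [Nontrivial (Fin (N + 1))]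
    {p : Fin n → Fin (N + 1) → k} (hp : ∀ j, p j ≠ 0) (m : Fin n → ℕ) :
    ∃ f ∈ fatIdeal p m, f ≠ 0 ∧ f.IsHomogeneous (∑ j, m j) := by
  choose ℓ hℓ hℓ0 hℓp using fun j => exists_linearForm_eval_eq_zero (hp j)
  refine ⟨∏ j, ℓ j ^ m j, ?_, ?_, ?_⟩
  · rw [fatIdeal, Ideal.mem_iInf]
    intro j
    rw [← Finset.mul_prod_erase _ _ (Finset.mem_univ j)]
    exact Ideal.mul_mem_right _ _
      (Ideal.pow_mem_pow (mem_pointIdeal_of_isHomogeneous (hℓ j) (hℓp j)) _)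
  · exact Finset.prod_ne_zero_iff.2 fun j _ => pow_ne_zero _ (hℓ0 j)
  · simpa using IsHomogeneous.prod _ _ _ fun j _ => (hℓ j).pow (m j)

theorem add_one_le_alpha {σ : Type*} [Nonempty σ] {I : Ideal (MvPolynomial σ k)} {t d : ℕ}
    (hne : ∃ f ∈ I, f ≠ 0 ∧ f.IsHomogeneous t) (h : ¬∃ f ∈ I, f ≠ 0 ∧ f.IsHomogeneous d) :
    d + 1 ≤ alpha I := by
  refine le_csInf ⟨t, hne⟩ fun b ⟨f, hf, hf0, hfb⟩ => ?_
  by_contra! hb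
  obtain i : σ := Classical.arbitrary σ
  refine h ⟨f * X i ^ (d - b), I.mul_mem_right _ hf,
    mul_ne_zero hf0 (pow_ne_zero _ (X_ne_zero i)), ?_⟩
  simpa [Nat.add_sub_cancel' (Nat.lt_succ_iff.1 hb)] using
    hfb.mul (isHomogeneous_X_pow i (d - b))

theorem div_le_of_tendsto_alphaSeq {p : Fin n → Fin (N + 1) → k} {m : Fin n → ℕ} {a b : ℕ}
    (hb : 0 < b) (h : ∀ t, 1 ≤ t → a * t ≤ alpha (fatIdeal p fun j => b * t * m j)) {γ : ℝ}
    (hγ : Tendsto (alphaSeq p m) atTop (nhds γ)) : (a / b : ℝ) ≤ γ := by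
  refine ge_of_tendsto (hγ.comp (tendsto_id.const_mul_atTop' hb)) ?_
  filter_upwards [eventually_ge_atTop 1] with t ht
  have hbt : (0 : ℝ) < b * t := by positivity
  simp only [Function.comp_apply, id, alphaSeq]
  rw [div_le_div_iff₀ (by positivity) (by exact_mod_cast hbt)]
  have := (Nat.cast_le (α := ℝ)).2 (h t ht)
  push_cast at this ⊢
  nlinarith

end Waldschmidt

theorem eq_zero_of_mem_fatIdeal {k : Type*} [Field k] {p : Fin 5 → Fin 4 → k}
    (hp : frameDet p ≠ 0) {m : ℕ} (hm : 1 ≤ m) {F : MvPolynomial (Fin 4) k}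
    (hF : F.IsHomogeneous (7 * m - 1))
    (h : F ∈ fatIdeal p ![6 * m, 6 * m, 3 * m, 3 * m, 3 * m]) : F = 0 := by
  obtain ⟨M, hM, hMp⟩ := exists_mulVec_stdFrame hp
  have h' := linearSubst_mem_fatIdeal hMp h
  rw [fatIdeal, Ideal.mem_iInf] at h'
  exact linearSubst_injective hM <| (eq_zero_of_vanishing_on_stdFrame hm (hF.linearSubst M)
    (h' 0) (h' 1) (h' 2) (h' 3) (h' 4)).trans (map_zero _).symm

end FatPoints

open FatPoints

theorem statement14_general (k : Type*) [Field k] :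
    Generic k 3 5 (fun p =>
      (∀ γ : ℝ, Tendsto (alphaSeq p ![2, 2, 1, 1, 1]) atTop (nhds γ) → 7 / 3 ≤ γ) ∧
      ∀ m : ℕ, 1 ≤ m →
        ¬ ∃ f ∈ fatIdeal p ![6 * m, 6 * m, 3 * m, 3 * m, 3 * m],
            f ≠ 0 ∧ f.IsHomogeneous (7 * m - 1)) := by
  have hΔ (p : Fin 5 → Fin 4 → k) :
      eval (fun q => p q.1 q.2) (frameDet fun j a => X (j, a)) = frameDet p :=
    (map_frameDet (eval fun q : Fin 5 × Fin 4 => p q.1 q.2) _).trans (by simp)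
  refine ⟨{frameDet fun j a => X (j, a)},
    ⟨stdFrame k 4, stdFrame_ne_zero, _, rfl, by simp [hΔ, frameDet_stdFrame]⟩, ?_⟩
  rintro p hp ⟨_, rfl, hpΔ⟩
  rw [hΔ] at hpΔ
  have hno (m : ℕ) (hm : 1 ≤ m) : ¬∃ f ∈ fatIdeal p ![6 * m, 6 * m, 3 * m, 3 * m, 3 * m],
      f ≠ 0 ∧ f.IsHomogeneous (7 * m - 1) :=
    fun ⟨F, hF, hF0, hFhom⟩ => hF0 (eq_zero_of_mem_fatIdeal hpΔ hm hFhom hF)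
  have hα (t : ℕ) (ht : 1 ≤ t) :
      7 * t ≤ alpha (fatIdeal p fun j => 3 * t * ![2, 2, 1, 1, 1] j) := by
    have hmult : (fun j => 3 * t * ![2, 2, 1, 1, 1] j) = ![6 * t, 6 * t, 3 * t, 3 * t, 3 * t] := by
      funext j
      fin_cases j <;> simp <;> ring
    obtain ⟨f, hf⟩ := exists_isHomogeneous_mem_fatIdeal hp ![6 * t, 6 * t, 3 * t, 3 * t, 3 * t]
    rw [hmult, show 7 * t = 7 * t - 1 + 1 by omega]
    exact add_one_le_alpha ⟨f, hf⟩ (hno t ht)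
  exact ⟨fun γ hγ => by exact_mod_cast div_le_of_tendsto_alphaSeq (by norm_num) hα hγ, hno⟩

/-- For `5` points in general position in `ℙ³`, `γ(I(2,2,1,1,1)) ≥ 7/3`; in fact
`I(6m,6m,3m,3m,3m)` contains no nonzero form of degree `7m - 1` for any `m ≥ 1`. -/
theorem statement14 (k : Type*) [Field k] [CharZero k] :
    Generic k 3 5 (fun p =>
      (∀ γ : ℝ, Tendsto (alphaSeq p ![2, 2, 1, 1, 1]) atTop (nhds γ) → 7 / 3 ≤ γ) ∧
      ∀ m : ℕ, 1 ≤ m →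
        ¬ ∃ f ∈ fatIdeal p ![6 * m, 6 * m, 3 * m, 3 * m, 3 * m],
            f ≠ 0 ∧ f.IsHomogeneous (7 * m - 1)) :=
  statement14_general k
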